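/- For every state s ∈ S and every strategy σ ∈ Σ^Opt, Val(s) = Pr_{σ,s}(□¬Bad). -/

import Mathlib

open scoped ENNReal NNReal Classical
open Filter

universe u v

variable {S : Type u} {A : Type v}

/-- A finite MDP: `P s a = some d` means action `a` is legal at `s` and `d` is a
probability distribution on `S`; every state has at least one legal action. -/
structure MDP (S : Type u) (A : Type v) [Fintype S] [Fintype A] where
  P : S → A → Option (S → NNReal)
  sum_one : ∀ s a d, P s a = some d → (∑ s', d s') = 1
  exists_legal : ∀ s, ∃ a, (P s a).isSome

/-- Last state of an alternating path starting at `s` with steps `steps`. -/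
def lastState : S → List (A × S) → S
  | s, [] => s
  | _, (_, s') :: rest => lastState s' rest

/-- A finite path: a start state together with a list of (action, next-state) steps. -/
structure FPath (S : Type u) (A : Type v) where
  start : S
  steps : List (A × S)

namespace FPath

def last (ρ : FPath S A) : S := lastState ρ.start ρ.steps

def states (ρ : FPath S A) : List S := ρ.start :: ρ.steps.map Prod.snd

def length (ρ : FPath S A) : ℕ := ρ.steps.length

end FPath

/-- A (raw) strategy: maps each finite path (start state + steps) to a distribution on actions. -/
def Strat (S : Type u) (A : Type v) := S → List (A × S) → A → ℝ≥0∞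

/-- Shifted strategy `σ_ρ` for `ρ = (s₀, pre)`: `σ_ρ(ρ') = σ(ρ·ρ')`. -/
def shiftStrat (σ : Strat S A) (s₀ : S) (pre : List (A × S)) : Strat S A :=
  fun _ steps a => σ s₀ (pre ++ steps) a

/-- Generic cylinder weight (product of strategy- and transition-probabilities along the
steps), relative to a transition kernel `p`. The accumulator `pre` is the path-prefix so far. -/
noncomputable def wtP (p : S → A → S → ℝ≥0∞) (σ : Strat S A) (s₀ : S) :
    List (A × S) → List (A × S) → ℝ≥0∞
  | _, [] => 1
  | pre, (a, s') :: rest =>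
      σ s₀ pre a * p (lastState s₀ pre) a s' * wtP p σ s₀ (pre ++ [(a, s')]) rest
  termination_by pre l => l.length

/-- Generic cylinder probability of path `ρ` from start state `s`, kernel `p`. -/
noncomputable def cylProbP (p : S → A → S → ℝ≥0∞) (σ : Strat S A) (s : S) (ρ : FPath S A) :
    ℝ≥0∞ :=
  if ρ.start = s then wtP p σ ρ.start [] ρ.steps else 0

namespace MDP

variable [Fintype S] [Fintype A]

def legal (M : MDP S A) (s : S) (a : A) : Prop := (M.P s a).isSome

noncomputable def prob (M : MDP S A) (s : S) (a : A) (s' : S) : ℝ≥0∞ :=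
  (M.P s a).elim 0 fun d => (d s' : ℝ≥0∞)

/-- `ρ` is a finite path of `M` from `s`: every action legal, every transition of
positive probability. -/
def IsPathFrom (M : MDP S A) : S → List (A × S) → Prop
  | _, [] => True
  | s, (a, s') :: rest => M.legal s a ∧ 0 < M.prob s a s' ∧ M.IsPathFrom s' rest

def IsPath (M : MDP S A) (ρ : FPath S A) : Prop := M.IsPathFrom ρ.start ρ.steps

/-- `σ` is a strategy: at every finite path it gives a probability distribution on actions
supported on actions legal at the last state. -/
def IsStrategy (M : MDP S A) (σ : Strat S A) : Prop :=
  ∀ s steps, M.IsPathFrom s steps →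
    (∑ a, σ s steps a) = 1 ∧ ∀ a, 0 < σ s steps a → M.legal (lastState s steps) a

/-- Cylinder probability `P_{σ,s}(ρ)` in `M`. -/
noncomputable def cylProb (M : MDP S A) (σ : Strat S A) (s : S) (ρ : FPath S A) : ℝ≥0∞ :=
  cylProbP M.prob σ s ρ

/-- `T` is a set of sink states: each `t ∈ T` has exactly one legal action, leading back
to `t` with probability `1`. -/
def SinkSet (M : MDP S A) (T : Set S) : Prop :=
  ∀ t ∈ T, (∃! a, M.legal t a) ∧ ∀ a, M.legal t a → M.prob t a t = 1

/-- Generic pruned finite-path predicate: all states have positive value `v` and every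
step uses an `opt` state-action pair with positive transition probability in `M`. -/
def IsPathFromPruned (M : MDP S A) (v : S → ℝ≥0∞) (opt : S → A → Prop) :
    S → List (A × S) → Prop
  | s, [] => 0 < v s
  | s, (a, s') :: rest =>
      0 < v s ∧ opt s a ∧ 0 < M.prob s a s' ∧ M.IsPathFromPruned v opt s' rest

/-! ### Reachability -/

/-- `ρ` is a `T`-hitting path: its last state lies in `T` and no other state does. -/
def HitsFirst (T : Set S) (ρ : FPath S A) : Prop :=
  ρ.last ∈ T ∧ ∀ x ∈ ρ.states.dropLast, x ∉ T

/-- `Pr_{σ,s}(◊T)`: sum over `T`-hitting paths starting at `s` of their cylinder probabilities. -/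
noncomputable def prReach (M : MDP S A) (σ : Strat S A) (s : S) (T : Set S) : ℝ≥0∞ :=
  ∑' ρ : {ρ : FPath S A // M.IsPath ρ ∧ HitsFirst T ρ ∧ ρ.start = s}, M.cylProb σ s ρ.1

/-- `Val(s)` for reachability: supremum over strategies of `Pr_{σ,s}(◊T)`. -/
noncomputable def reachVal (M : MDP S A) (T : Set S) (s : S) : ℝ≥0∞ :=
  ⨆ (σ : Strat S A) (_ : M.IsStrategy σ), M.prReach σ s T

/-- `(s,a) ∈ Opt` for reachability. -/
def OptR (M : MDP S A) (T : Set S) (s : S) (a : A) : Prop :=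
  M.legal s a ∧ M.reachVal T s = ∑ s', M.prob s a s' * M.reachVal T s'

/-- `σ ∈ Σ^Opt` for reachability. -/
def SigmaOptR (M : MDP S A) (T : Set S) (σ : Strat S A) : Prop :=
  ∀ s steps, M.IsPathFrom s steps → ∀ a, 0 < σ s steps a → M.OptR T (lastState s steps) a

/-- Transition probabilities of the pruned MDP `M'` for reachability. -/
noncomputable def probR' (M : MDP S A) (T : Set S) (s : S) (a : A) (s' : S) : ℝ≥0∞ :=
  if M.OptR T s a ∧ 0 < M.reachVal T s then
    M.prob s a s' * M.reachVal T s' / M.reachVal T s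
  else 0

/-- `ρ` is a finite path of the pruned MDP `M'` (reachability version). -/
def IsPathR' (M : MDP S A) (T : Set S) (ρ : FPath S A) : Prop :=
  M.IsPathFromPruned (M.reachVal T) (M.OptR T) ρ.start ρ.steps

/-- Cylinder probability `P'_{σ,s}(ρ)` in the pruned MDP `M'` (reachability version). -/
noncomputable def cylProbR' (M : MDP S A) (T : Set S) (σ : Strat S A) (s : S) (ρ : FPath S A) :
    ℝ≥0∞ :=
  cylProbP (M.probR' T) σ s ρ

/-- `Pr'_{σ,s}(◊T)` in the pruned MDP `M'`. -/
noncomputable def prReach' (M : MDP S A) (σ : Strat S A) (s : S) (T : Set S) : ℝ≥0∞ :=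
  ∑' ρ : {ρ : FPath S A // M.IsPathR' T ρ ∧ HitsFirst T ρ ∧ ρ.start = s},
    M.cylProbR' T σ s ρ.1

/-- Probability of hitting `T` for the first time in exactly `r` steps, in `M`. -/
noncomputable def hitLenProb (M : MDP S A) (σ : Strat S A) (s : S) (T : Set S) (r : ℕ) :
    ℝ≥0∞ :=
  ∑' ρ : {ρ : FPath S A // M.IsPath ρ ∧ HitsFirst T ρ ∧ ρ.start = s ∧ ρ.length = r},
    M.cylProb σ s ρ.1

/-- Probability of hitting `T` for the first time in exactly `r` steps, in `M'`. -/
noncomputable def hitLenProb' (M : MDP S A) (σ : Strat S A) (s : S) (T : Set S) (r : ℕ) :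
    ℝ≥0∞ :=
  ∑' ρ : {ρ : FPath S A // M.IsPathR' T ρ ∧ HitsFirst T ρ ∧ ρ.start = s ∧ ρ.length = r},
    M.cylProbR' T σ s ρ.1

/-- Conditional expected length to target `E_{σ,s}(len_T | ◊T)`. -/
noncomputable def condExpLen (M : MDP S A) (σ : Strat S A) (s : S) (T : Set S) : ℝ≥0∞ :=
  ∑' r : ℕ, (r : ℝ≥0∞) * M.hitLenProb σ s T r / M.prReach σ s T

/-- Expected length to target in `M'`, `E'_{σ,s}(len_T)`; `∞` unless `Pr'_{σ,s}(◊T) = 1`. -/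
noncomputable def expLen' (M : MDP S A) (σ : Strat S A) (s : S) (T : Set S) : ℝ≥0∞ :=
  if M.prReach' σ s T = 1 then ∑' r : ℕ, (r : ℝ≥0∞) * M.hitLenProb' σ s T r else ⊤

/-! ### Safety -/

/-- `Safe_n(σ,s)`: probability of the paths of length `n` from `s` avoiding `Bad`. -/
noncomputable def safeN (M : MDP S A) (σ : Strat S A) (s : S) (Bad : Set S) (n : ℕ) : ℝ≥0∞ :=
  ∑' ρ : {ρ : FPath S A //
      M.IsPath ρ ∧ ρ.start = s ∧ ρ.length = n ∧ ∀ x ∈ ρ.states, x ∉ Bad},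
    M.cylProb σ s ρ.1

/-- `Pr_{σ,s}(□¬Bad) := ⨅ n, Safe_n(σ,s)`. -/
noncomputable def prSafe (M : MDP S A) (σ : Strat S A) (s : S) (Bad : Set S) : ℝ≥0∞ :=
  ⨅ n : ℕ, M.safeN σ s Bad n

/-- `Val(s)` for safety: supremum over strategies of `Pr_{σ,s}(□¬Bad)`. -/
noncomputable def safeVal (M : MDP S A) (Bad : Set S) (s : S) : ℝ≥0∞ :=
  ⨆ (σ : Strat S A) (_ : M.IsStrategy σ), M.prSafe σ s Bad

/-- `(s,a) ∈ Opt` for safety. -/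
def OptS (M : MDP S A) (Bad : Set S) (s : S) (a : A) : Prop :=
  M.legal s a ∧ M.safeVal Bad s = ∑ s', M.prob s a s' * M.safeVal Bad s'

/-- `σ ∈ Σ^Opt` for safety. -/
def SigmaOptS (M : MDP S A) (Bad : Set S) (σ : Strat S A) : Prop :=
  ∀ s steps, M.IsPathFrom s steps → ∀ a, 0 < σ s steps a → M.OptS Bad (lastState s steps) a

/-- `UPreⁱ(Bad)`. -/
def UPre (M : MDP S A) (Bad : Set S) : ℕ → Set S
  | 0 => Bad
  | i + 1 => {s | ∀ a, M.legal s a → ∃ s' ∈ M.UPre Bad i, 0 < M.prob s a s'}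

/-- `Good := S \ UPre*(Bad)`. -/
def GoodSet (M : MDP S A) (Bad : Set S) : Set S := (⋃ i, M.UPre Bad i)ᶜ

/-- `V := S \ (Good ∪ Bad)`. -/
def VSet (M : MDP S A) (Bad : Set S) : Set S := (M.GoodSet Bad ∪ Bad)ᶜ

/-- `Pr_{σ,s}(GoodCyl(ρ)) := P_{σ,s}(ρ) · Pr_{σ_ρ, last(ρ)}(□¬Bad)`. -/
noncomputable def goodCyl (M : MDP S A) (σ : Strat S A) (s : S) (Bad : Set S) (ρ : FPath S A) :
    ℝ≥0∞ :=
  M.cylProb σ s ρ * M.prSafe (shiftStrat σ ρ.start ρ.steps) ρ.last Bad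

/-- Transition probabilities of the pruned MDP `M'` for safety. -/
noncomputable def probS' (M : MDP S A) (Bad : Set S) (s : S) (a : A) (s' : S) : ℝ≥0∞ :=
  if M.OptS Bad s a ∧ 0 < M.safeVal Bad s then
    M.prob s a s' * M.safeVal Bad s' / M.safeVal Bad s
  else 0

/-- `ρ` is a finite path of the pruned MDP `M'` (safety version). -/
def IsPathS' (M : MDP S A) (Bad : Set S) (ρ : FPath S A) : Prop :=
  M.IsPathFromPruned (M.safeVal Bad) (M.OptS Bad) ρ.start ρ.steps

/-- Cylinder probability `P'_{σ,s}(ρ)` in the pruned MDP `M'` (safety version). -/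
noncomputable def cylProbS' (M : MDP S A) (Bad : Set S) (σ : Strat S A) (s : S)
    (ρ : FPath S A) : ℝ≥0∞ :=
  cylProbP (M.probS' Bad) σ s ρ

end MDP

/-- `Reward_n(ρ) = ∑_{i<n} R(sᵢ, aᵢ)` for `ρ` starting at `s` with steps `steps`. -/
def rewardOf (R : S → A → ℝ) : S → List (A × S) → ℝ
  | _, [] => 0
  | s, (a, s') :: rest => R s a + rewardOf R s' rest

namespace MDP

variable [Fintype S] [Fintype A]

/-- `E'_{σ,s}(Reward_n)` in the pruned MDP `M'` (safety version). -/
noncomputable def expRewN' (M : MDP S A) (Bad : Set S) (R : S → A → ℝ) (σ : Strat S A)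
    (s : S) (n : ℕ) : ℝ :=
  ∑' ρ : {ρ : FPath S A // M.IsPathS' Bad ρ ∧ ρ.start = s ∧ ρ.length = n},
    (M.cylProbS' Bad σ s ρ.1).toReal * rewardOf R ρ.1.start ρ.1.steps

/-- `E'_{σ,s}(MP) := liminf_n (1/n)·E'_{σ,s}(Reward_n)`. -/
noncomputable def mp' (M : MDP S A) (Bad : Set S) (R : S → A → ℝ) (σ : Strat S A) (s : S) :
    ℝ :=
  Filter.atTop.liminf fun n : ℕ => M.expRewN' Bad R σ s n / n

/-- `E_{σ,s}(Reward_n | □¬Bad)`. -/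
noncomputable def condExpRewN (M : MDP S A) (Bad : Set S) (R : S → A → ℝ) (σ : Strat S A)
    (s : S) (n : ℕ) : ℝ :=
  (∑' ρ : {ρ : FPath S A // M.IsPath ρ ∧ ρ.start = s ∧ ρ.length = n},
    (M.goodCyl σ s Bad ρ.1).toReal * rewardOf R ρ.1.start ρ.1.steps) /
  (M.prSafe σ s Bad).toReal

/-- `E_{σ,s}(MP | □¬Bad) := liminf_n (1/n)·E_{σ,s}(Reward_n | □¬Bad)`. -/
noncomputable def condMP (M : MDP S A) (Bad : Set S) (R : S → A → ℝ) (σ : Strat S A)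
    (s : S) : ℝ :=
  Filter.atTop.liminf fun n : ℕ => M.condExpRewN Bad R σ s n / n

end MDP

/-!
`Val(t) ≤ Safe_n(σ, t)` for every `n` by induction, simultaneously for all states `t` and all
strategies playing only optimal actions from `t`. `Safe_0` does not depend on the strategy, which
gives the base case. For `t ∉ Bad`, one step of `σ` averages the Bellman identities
`Val(t) = ∑ P(t,a,s') Val(s')` of the actions it plays, and after the step `(a, s')` the shifted
strategy is again optimal from `s'`. The reverse inequality holds because `Val` is a supremum.
-/

theorem ENNReal.tsum_list_eq_tsum_cons {α : Type*} (f : List α → ℝ≥0∞) (hf : f [] = 0) :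
    ∑' l, f l = ∑' a, ∑' l, f (a :: l) := by
  rw [← ENNReal.tsum_prod' (f := fun p : α × List α => f (p.1 :: p.2))]
  refine (Function.Injective.tsum_eq (g := fun p : α × List α => p.1 :: p.2) ?_ ?_).symm
  · rintro ⟨a, l⟩ ⟨b, m⟩ h
    simp_all
  · rintro (_ | ⟨a, l⟩) h
    · exact absurd hf h
    · exact ⟨(a, l), rfl⟩

theorem lastState_append (s : S) (l₁ l₂ : List (A × S)) :
    lastState s (l₁ ++ l₂) = lastState (lastState s l₁) l₂ := by
  induction l₁ generalizing s with
  | nil => rfl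
  | cons p _ ih => exact ih p.2

theorem wtP_append (p : S → A → S → ℝ≥0∞) (σ : Strat S A) (s₀ : S)
    (pre q l : List (A × S)) :
    wtP p σ s₀ (pre ++ q) l = wtP p (shiftStrat σ s₀ pre) (lastState s₀ pre) q l := by
  induction l generalizing q with
  | nil => simp only [wtP]
  | cons x rest ih =>
    rw [wtP, wtP, lastState_append, List.append_assoc, ih]
    rfl

namespace MDP

variable [Fintype S] [Fintype A]

theorem legal_of_prob_pos (M : MDP S A) {s : S} {a : A} {s' : S} (h : 0 < M.prob s a s') :
    M.legal s a := by
  unfold prob at h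
  unfold legal
  cases hP : M.P s a <;> simp_all

def IsSafePathFrom (M : MDP S A) (Bad : Set S) (t : S) (n : ℕ) (l : List (A × S)) : Prop :=
  M.IsPathFrom t l ∧ l.length = n ∧ ∀ x ∈ t :: l.map Prod.snd, x ∉ Bad

theorem isSafePathFrom_zero (M : MDP S A) (Bad : Set S) (t : S) (l : List (A × S)) :
    M.IsSafePathFrom Bad t 0 l ↔ l = [] ∧ t ∉ Bad := by
  cases l <;> simp [IsSafePathFrom, IsPathFrom]

theorem not_isSafePathFrom_succ_nil (M : MDP S A) (Bad : Set S) (t : S) (n : ℕ) :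
    ¬M.IsSafePathFrom Bad t (n + 1) [] := by
  simp [IsSafePathFrom]

theorem isSafePathFrom_succ_cons (M : MDP S A) (Bad : Set S) (t : S) (n : ℕ) (a : A) (s' : S)
    (l : List (A × S)) :
    M.IsSafePathFrom Bad t (n + 1) ((a, s') :: l) ↔
      (M.legal t a ∧ 0 < M.prob t a s') ∧ t ∉ Bad ∧ M.IsSafePathFrom Bad s' n l := by
  simp only [IsSafePathFrom, IsPathFrom, List.length_cons, List.map_cons,
    List.forall_mem_cons, Nat.add_right_cancel_iff]
  tauto

theorem safeN_eq_tsum (M : MDP S A) (σ : Strat S A) (s : S) (Bad : Set S) (n : ℕ) :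
    M.safeN σ s Bad n =
      ∑' l, if M.IsSafePathFrom Bad s n l then wtP M.prob σ s [] l else 0 := by
  refine (tsum_subtype {ρ : FPath S A | _} (M.cylProb σ s)).trans ?_
  have hmk : Function.Injective (FPath.mk (A := A) s) := fun _ _ h => by cases h; rfl
  refine (hmk.tsum_eq ?_).symm.trans ?_
  · rintro ⟨t, l⟩ h
    obtain ⟨-, rfl, -⟩ := Set.mem_of_indicator_ne_zero h
    exact ⟨l, rfl⟩
  · refine tsum_congr fun l => ?_
    simp only [Set.indicator, Set.mem_ofPred_eq, cylProb, cylProbP, if_true, true_and]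
    exact if_congr Iff.rfl rfl rfl

theorem safeN_zero (M : MDP S A) (σ : Strat S A) (t : S) (Bad : Set S) :
    M.safeN σ t Bad 0 = if t ∈ Bad then 0 else 1 := by
  rw [safeN_eq_tsum, tsum_eq_single []]
  · by_cases ht : t ∈ Bad <;> simp [isSafePathFrom_zero, ht, wtP]
  · intro l hl
    simp [isSafePathFrom_zero, hl]

theorem safeN_succ (M : MDP S A) (σ : Strat S A) (t : S) (Bad : Set S) (n : ℕ) :
    M.safeN σ t Bad (n + 1) = if t ∈ Bad then 0 else
      ∑ a, ∑ s', σ t [] a * M.prob t a s' * M.safeN (shiftStrat σ t [(a, s')]) s' Bad n := by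
  rw [safeN_eq_tsum,
    ENNReal.tsum_list_eq_tsum_cons _ (if_neg (M.not_isSafePathFrom_succ_nil Bad t n)),
    ENNReal.tsum_prod', tsum_fintype]
  split_ifs with ht
  · simp [isSafePathFrom_succ_cons, ht]
  refine Finset.sum_congr rfl fun a _ => ?_
  rw [tsum_fintype]
  refine Finset.sum_congr rfl fun s' _ => ?_
  by_cases hp : 0 < M.prob t a s'
  · rw [safeN_eq_tsum, ← ENNReal.tsum_mul_left]
    refine tsum_congr fun l => ?_
    simp only [isSafePathFrom_succ_cons, M.legal_of_prob_pos hp, hp, ht, not_false_eq_true,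
      and_self, true_and]
    split_ifs
    · rw [wtP, ← List.append_nil [(a, s')], List.nil_append, wtP_append]
      rfl
    · rw [mul_zero]
  · rw [not_lt, nonpos_iff_eq_zero] at hp
    simp [isSafePathFrom_succ_cons, hp]

/-- `IsStrategy ∧ SigmaOptS` restricted to paths from `t`: unlike the unrestricted version, it
survives shifting the strategy along a step out of `t`. -/
def IsOptimalFrom (M : MDP S A) (Bad : Set S) (σ : Strat S A) (t : S) : Prop :=
  ∀ steps, M.IsPathFrom t steps →
    (∑ a, σ t steps a) = 1 ∧ ∀ a, 0 < σ t steps a → M.OptS Bad (lastState t steps) a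

theorem IsOptimalFrom.shiftStrat {M : MDP S A} {Bad : Set S} {σ : Strat S A} {t : S}
    (hσ : M.IsOptimalFrom Bad σ t) {a : A} {s' : S} (ha : M.legal t a)
    (hp : 0 < M.prob t a s') : M.IsOptimalFrom Bad (shiftStrat σ t [(a, s')]) s' :=
  fun steps hsteps => hσ ((a, s') :: steps) ⟨ha, hp, hsteps⟩

theorem safeVal_le_safeN_zero (M : MDP S A) (Bad : Set S) (σ : Strat S A) (t : S) :
    M.safeVal Bad t ≤ M.safeN σ t Bad 0 :=
  iSup₂_le fun σ' _ => (iInf_le _ 0).trans (by rw [safeN_zero, safeN_zero])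

theorem safeVal_le_safeN (M : MDP S A) (Bad : Set S) (n : ℕ) :
    ∀ σ t, M.IsOptimalFrom Bad σ t → M.safeVal Bad t ≤ M.safeN σ t Bad n := by
  induction n with
  | zero => exact fun σ t _ => M.safeVal_le_safeN_zero Bad σ t
  | succ n ih =>
    intro σ t hσ
    by_cases ht : t ∈ Bad
    · calc M.safeVal Bad t ≤ M.safeN σ t Bad 0 := M.safeVal_le_safeN_zero Bad σ t
        _ = 0 := by rw [safeN_zero, if_pos ht]
        _ ≤ _ := zero_le
    obtain ⟨hsum, hopt⟩ := hσ [] trivial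
    calc M.safeVal Bad t = ∑ a, σ t [] a * M.safeVal Bad t := by
          rw [← Finset.sum_mul, hsum, one_mul]
      _ ≤ ∑ a, ∑ s', σ t [] a * M.prob t a s' *
            M.safeN (shiftStrat σ t [(a, s')]) s' Bad n := by
        refine Finset.sum_le_sum fun a _ => ?_
        rcases eq_zero_or_pos (σ t [] a) with hσa | hσa
        · simp [hσa]
        obtain ⟨hlegal, hbellman⟩ : M.OptS Bad t a := hopt a hσa
        rw [hbellman, Finset.mul_sum]
        refine Finset.sum_le_sum fun s' _ => ?_
        rcases eq_zero_or_pos (M.prob t a s') with hp | hp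
        · simp [hp]
        rw [mul_assoc]
        exact mul_le_mul_right (mul_le_mul_right (ih _ s' (hσ.shiftStrat hlegal hp)) _) _
      _ = M.safeN σ t Bad (n + 1) := by rw [safeN_succ, if_neg ht]

end MDP

theorem stmt15_general {S : Type u} {A : Type v} [Fintype S] [Fintype A]
    (M : MDP S A) (Bad : Set S)
    (s : S) (σ : Strat S A) (hσ : M.IsStrategy σ) (hopt : M.SigmaOptS Bad σ) :
    M.safeVal Bad s = M.prSafe σ s Bad := by
  refine le_antisymm (le_iInf fun n => M.safeVal_le_safeN Bad n σ s ?_) ?_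
  · exact fun steps hsteps => ⟨(hσ s steps hsteps).1, hopt s steps hsteps⟩
  · exact le_iSup₂ (f := fun σ' (_ : M.IsStrategy σ') => M.prSafe σ' s Bad) σ hσ

/-- for every state `s` and every `σ ∈ Σ^Opt`, `Val(s) = Pr_{σ,s}(□¬Bad)`. -/
theorem stmt15 {S : Type u} {A : Type v} [Fintype S] [Fintype A] [Nonempty S] [Nonempty A]
    (M : MDP S A) (Bad : Set S) (hBad : M.SinkSet Bad)
    (s : S) (σ : Strat S A) (hσ : M.IsStrategy σ) (hopt : M.SigmaOptS Bad σ) :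
    M.safeVal Bad s = M.prSafe σ s Bad :=
  stmt15_general M Bad s σ hσ hopt
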